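/- For every integer k ≥ 2, every strong pseudo k-metric space (X, d) with |X| = n belongs to C_{k,∞}^m with m = binom(n, k): there exist (k−2)-chains f_1,…,f_m on X such that d(x_1,…,x_k) = max_{i∈[m]} |(δf_i)(x_1,…,x_k)| for all distinct x_1,…,x_k ∈ X. Consequently, the family of finite coboundary k-metric spaces with respect to the ℓ_∞ norm coincides exactly with the family of finite strong pseudo k-metric spaces. -/

import Mathlib

open scoped BigOperators

/-- An alternating real-valued function on `j`-tuples of `X`
(a `(j-1)`-dimensional chain on the complete complex on `X`). -/
def AltChain {X : Type*} {j : ℕ} (α : (Fin j → X) → ℝ) : Prop :=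
  ∀ (π : Equiv.Perm (Fin j)) (x : Fin j → X),
    α (x ∘ π) = ((Equiv.Perm.sign π : ℤ) : ℝ) * α x

/-- The boundary operator: `(∂α)(y₁,…,y_j) = ∑_{x ∈ X} α(x, y₁, …, y_j)`. -/
noncomputable def bdry {X : Type*} [Fintype X] {j : ℕ}
    (α : (Fin (j + 1) → X) → ℝ) : (Fin j → X) → ℝ :=
  fun y => ∑ x : X, α (Fin.cons x y)

/-- The elementary chain `1_t`: value `sign π` on the reordering of `t` by `π`,
and `0` on all other tuples. -/
noncomputable def unitChain {X : Type*} [DecidableEq X] {j : ℕ} (t : Fin j → X) :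
    (Fin j → X) → ℝ :=
  fun s => ∑ π : Equiv.Perm (Fin j),
    if s = t ∘ π then ((Equiv.Perm.sign π : ℤ) : ℝ) else 0

/-- The coboundary operator:
`(δf)(x₁,…,x_{j+2}) = ∑ᵢ (-1)^(i+1) f(x₁,…,x̂ᵢ,…,x_{j+2})` (`0`-indexed sign `(-1)^i`). -/
noncomputable def cobdry {X : Type*} {j : ℕ}
    (f : (Fin (j + 1) → X) → ℝ) : (Fin (j + 2) → X) → ℝ :=
  fun x => ∑ i : Fin (j + 2), (-1 : ℝ) ^ (i : ℕ) * f (x ∘ i.succAbove)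

/-- A pseudo metric of arity `K` (a pseudo `K`-metric): nonnegative, vanishing on
non-injective tuples, permutation invariant, satisfying the simplex inequality. -/
structure IsPseudoMetric {X : Type*} (K : ℕ) (d : (Fin K → X) → ℝ) : Prop where
  nonneg : ∀ x, 0 ≤ d x
  eq_zero : ∀ x, ¬ Function.Injective x → d x = 0
  perm : ∀ (π : Equiv.Perm (Fin K)) (x), d (x ∘ π) = d x
  simplex : ∀ (x : Fin K → X) (y : X),
    d x ≤ ∑ i : Fin K, d (Function.update x i y)

/-- A strong pseudo metric of arity `k + 1` (a strong pseudo `(k+1)`-metric).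
The strong simplex inequality `d t ≤ ∑_τ |α(τ)| * d(τ)` (with the sum over
`(k+1)`-element subsets `τ` of `X`, each evaluated on any fixed ordering of `τ`)
is stated in the equivalent form `(k+1)! * d t ≤ ∑_s |α(s)| * d(s)` with the sum
over all `(k+1)`-tuples `s`: since `α` is alternating and `d` is permutation
invariant, the summand depends only on the underlying set of `s` (it vanishes on
tuples with repeated entries), and each `(k+1)`-element subset has exactly
`(k+1)!` orderings. -/
structure IsStrongPseudoMetric {X : Type*} [Fintype X] [DecidableEq X] (k : ℕ)
    (d : (Fin (k + 1) → X) → ℝ) : Prop where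
  nonneg : ∀ x, 0 ≤ d x
  eq_zero : ∀ x, ¬ Function.Injective x → d x = 0
  perm : ∀ (π : Equiv.Perm (Fin (k + 1))) (x), d (x ∘ π) = d x
  strong_simplex : ∀ t : Fin (k + 1) → X, Function.Injective t →
    ∀ α : (Fin (k + 1) → X) → ℝ, AltChain α → bdry α = bdry (unitChain t) →
      ((k + 1).factorial : ℝ) * d t ≤ ∑ s : Fin (k + 1) → X, |α s| * d s

/-- `(X, d)` is a coboundary metric of arity `k + 2` in `m` dimensions with respect
to the norm `ν` on `ℝ^m`: there are chains `f 1, …, f m` on `(k+1)`-tuples (i.e.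
`(k+2)-2`-dimensional chains for arity `k+2`) whose simultaneous coboundary
realizes `d` on injective tuples, and `d` vanishes on non-injective tuples. -/
def IsCoboundaryMetric {X : Type*} (k m : ℕ) (ν : (Fin m → ℝ) → ℝ)
    (d : (Fin (k + 2) → X) → ℝ) : Prop :=
  ∃ f : Fin m → ((Fin (k + 1) → X) → ℝ),
    (∀ i, AltChain (f i)) ∧
    (∀ x, Function.Injective x → d x = ν (fun i => cobdry (f i) x)) ∧
    (∀ x, ¬ Function.Injective x → d x = 0)

/-- `ν` is a norm on `ℝ^m`. -/
structure IsNorm {m : ℕ} (ν : (Fin m → ℝ) → ℝ) : Prop where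
  nonneg : ∀ x, 0 ≤ ν x
  eq_zero_iff : ∀ x, ν x = 0 ↔ x = 0
  homog : ∀ (c : ℝ) (x), ν (c • x) = |c| * ν x
  triangle : ∀ x y, ν (x + y) ≤ ν x + ν y

/-- The `ℓ_p` norm on `ℝ^m` for real `p`. -/
noncomputable def lpNorm (p : ℝ) {m : ℕ} (x : Fin m → ℝ) : ℝ :=
  (∑ i, |x i| ^ p) ^ (1 / p)

/-- The `ℓ_1` norm on `ℝ^m`. -/
noncomputable def l1Norm {m : ℕ} (x : Fin m → ℝ) : ℝ := ∑ i, |x i|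

/-- The `ℓ_2` (Euclidean) norm on `ℝ^m`. -/
noncomputable def l2Norm {m : ℕ} (x : Fin m → ℝ) : ℝ := Real.sqrt (∑ i, x i ^ 2)

/-- The `ℓ_∞` norm on `ℝ^m` (the sup norm, which is the norm of `Fin m → ℝ`). -/
noncomputable def linfNorm {m : ℕ} (x : Fin m → ℝ) : ℝ := ‖x‖

/- The apex extension of `d` (of arity `K`), with the apex being
`none : Option X` (a new element not in `X`): on an injective `(K+1)`-tuple
containing the apex in position `i` it is `d` of the tuple with position `i`
removed, and it is `0` on all other tuples. -/
open Classical in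
noncomputable def apexExt {X : Type*} {K : ℕ} (d : (Fin K → X) → ℝ) :
    (Fin (K + 1) → Option X) → ℝ := fun x =>
  if h : Function.Injective x ∧ ∃ i, x i = none then
    d (fun j =>
      Option.get (x ((Classical.choose h.2).succAbove j))
        (by
          rw [Option.isSome_iff_ne_none]
          intro hnone
          exact Fin.succAbove_ne (Classical.choose h.2) j
            (h.1 (hnone.trans (Classical.choose_spec h.2).symm))))
  else 0

/-- The `K`-dimensional volume of the simplex with vertices `y 0, …, y K` in `ℝ^m`:
`(1/K!) * √(det (AᵀA))` where `A` is the `m × K` matrix with columns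
`y i - y 0`, `i = 1, …, K`. -/
noncomputable def simplexVolume {m K : ℕ} (y : Fin (K + 1) → (Fin m → ℝ)) : ℝ :=
  (1 / (K.factorial : ℝ)) *
    Real.sqrt
      (Matrix.det
        (Matrix.of fun i j : Fin K =>
          ∑ l : Fin m, (y i.succ l - y 0 l) * (y j.succ l - y 0 l)))

/-!
Converse direction: for alternating `f` and `β`, Stokes' formula `⟨δf, β⟩ ∝ ⟨f, ∂β⟩` shows that
`⟨δf, α⟩ = ⟨δf, 1_t⟩ = (k+2)! δf(t)` whenever `∂α = ∂1_t`, so `|δf| ≤ d` gives the strong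
simplex inequality.

Main direction: fix an injective `t`. The strong simplex inequality says that `d t` is at most
the mass `∑_τ |α τ| d τ` of every alternating `α` with `∂α = ∂1_t`. By Hahn–Banach there is a
functional `c` on boundaries with `c(∂1_t) = d t` and `|c(∂α)| ≤ mass α`. Writing
`c(∂1_s) = δf(s)` for the alternatization `f` of `c` gives `|δf| ≤ d` with equality at `t`;
taking one such `f` for every `(k+2)`-subset of `X` realises `d` as an `ℓ_∞` norm.
-/

open Equiv Equiv.Perm Finset

section Duality
variable {E ι : Type*} [AddCommGroup E] [Module ℝ E] [Fintype ι]

theorem exists_dotProduct_eq_of_le_seminorm (T : E →ₗ[ℝ] ι → ℝ) (p : Seminorm ℝ E) {x₀ : E}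
    {a : ℝ} (ha : 0 ≤ a) (h : ∀ y, T y = T x₀ → a ≤ p y) :
    ∃ c : ι → ℝ, c ⬝ᵥ T x₀ = a ∧ ∀ y, |c ⬝ᵥ T y| ≤ p y := by
  by_cases hx₀ : x₀ ∈ LinearMap.ker T
  · have : a = 0 := le_antisymm (by simpa using h 0 (by simpa using hx₀.symm)) ha
    exact ⟨0, by simp [this], fun y => by simp⟩
  let f : E →ₗ.[ℝ] ℝ := LinearPMap.supSpanSingleton ⟨LinearMap.ker T, 0⟩ x₀ a hx₀
  have hf : ∀ x : f.domain, f x ≤ p x := by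
    rintro ⟨x, hx⟩
    obtain ⟨z, hz, _, hc, rfl⟩ := Submodule.mem_sup.1 hx
    obtain ⟨c, rfl⟩ := Submodule.mem_span_singleton.1 hc
    rw [LinearPMap.supSpanSingleton_apply_mk _ _ _ _ _ hz]
    change 0 + c * a ≤ p (z + c • x₀)
    rw [zero_add]
    rcases le_or_gt c 0 with hc | hc
    · exact (mul_nonpos_of_nonpos_of_nonneg hc ha).trans (apply_nonneg _ _)
    · have hfib : T (c⁻¹ • z + x₀) = T x₀ := by simp [LinearMap.mem_ker.1 hz]
      calc c * a ≤ c * p (c⁻¹ • z + x₀) := mul_le_mul_of_nonneg_left (h _ hfib) hc.le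
        _ = p (c • (c⁻¹ • z + x₀)) := by rw [map_smul_eq_mul, Real.norm_eq_abs, abs_of_pos hc]
        _ = p (z + c • x₀) := by rw [smul_add, smul_smul, mul_inv_cancel₀ hc.ne', one_smul]
  obtain ⟨g, hgf, hgp⟩ := exists_extension_of_le_sublinear f p
    (fun c hc x => by rw [map_smul_eq_mul, Real.norm_eq_abs, abs_of_pos hc])
    (map_add_le_add p) hf
  have hker : ⨅ i, LinearMap.ker (LinearMap.proj i ∘ₗ T) ≤ LinearMap.ker g := by
    intro z hz
    have hzT : z ∈ LinearMap.ker T := by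
      simpa [Submodule.mem_iInf, LinearMap.mem_ker, funext_iff] using hz
    rw [LinearMap.mem_ker, hgf ⟨z, Submodule.mem_sup_left hzT⟩,
      LinearPMap.supSpanSingleton_apply_mk_of_mem _ _ _ hzT]
    rfl
  obtain ⟨c, hc⟩ :=
    (Submodule.mem_span_range_iff_exists_fun ℝ).1 (mem_span_of_iInf_ker_le_ker hker)
  have hg : ∀ y, g y = c ⬝ᵥ T y := fun y => by
    rw [← hc]; simp [dotProduct]
  refine ⟨c, ?_, fun y => abs_le.2 ⟨?_, ?_⟩⟩
  · rw [← hg, hgf ⟨x₀, Submodule.mem_sup_right (Submodule.mem_span_singleton_self x₀)⟩,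
      LinearPMap.supSpanSingleton_apply_self]
  · have := hgp (-y)
    rw [map_neg, map_neg_eq_map, hg] at this
    linarith
  · exact hg y ▸ hgp y

end Duality

section Alternatization
variable {X : Type*} {n : ℕ}

lemma intCast_units_mul_self (u : ℤˣ) : ((u : ℤ) : ℝ) * (u : ℤ) = 1 := by
  rw [← Int.cast_mul, Int.units_coe_mul_self, Int.cast_one]

lemma abs_intCast_units (u : ℤˣ) : |((u : ℤ) : ℝ)| = 1 := by
  rcases Int.units_eq_one_or u with rfl | rfl <;> simp

lemma AltChain.abs_comp_perm {α : (Fin n → X) → ℝ} (hα : AltChain α) (π : Perm (Fin n))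
    (x : Fin n → X) : |α (x ∘ π)| = |α x| := by
  rw [hα, abs_mul, abs_intCast_units, one_mul]

lemma AltChain.eq_zero_of_not_injective {α : (Fin n → X) → ℝ} (hα : AltChain α)
    {x : Fin n → X} (hx : ¬ Function.Injective x) : α x = 0 := by
  obtain ⟨i, j, hij, hne⟩ := Function.not_injective_iff.1 hx
  have hswap : x ∘ swap i j = x := by
    funext l
    rcases eq_or_ne l i with rfl | hi
    · simp [hij]
    rcases eq_or_ne l j with rfl | hj
    · simp [hij]
    · simp [swap_apply_of_ne_of_ne hi hj]
  have := hα (swap i j) x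
  rw [hswap, sign_swap hne] at this
  push_cast at this
  linarith

noncomputable def alternatization (F : (Fin n → X) → ℝ) : (Fin n → X) → ℝ :=
  fun x => ∑ π : Perm (Fin n), ((sign π : ℤ) : ℝ) * F (x ∘ π)

lemma altChain_alternatization (F : (Fin n → X) → ℝ) : AltChain (alternatization F) := by
  intro σ x
  rw [alternatization, alternatization, mul_sum]
  refine Fintype.sum_equiv (Equiv.mulLeft σ) _ _ fun π => ?_
  rw [coe_mulLeft, Perm.sign_mul, Units.val_mul, Int.cast_mul, ← mul_assoc, ← mul_assoc,
    intCast_units_mul_self, one_mul]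
  rfl

lemma alternatization_of_altChain {F : (Fin n → X) → ℝ} (hF : AltChain F) :
    alternatization F = (n.factorial : ℝ) • F := by
  funext x
  simp only [alternatization, hF _ x, ← mul_assoc, intCast_units_mul_self, one_mul, sum_const,
    card_univ, Fintype.card_perm, Fintype.card_fin, nsmul_eq_mul, Pi.smul_apply, smul_eq_mul]

variable [Fintype X]

lemma sum_comp_perm (F : (Fin n → X) → ℝ) (π : Perm (Fin n)) :
    ∑ s, F (s ∘ π) = ∑ s, F s :=
  Equiv.sum_comp (arrowCongr π.symm (Equiv.refl X)) F

lemma sum_alternatization_mul (F G : (Fin n → X) → ℝ) :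
    ∑ s, alternatization F s * G s = ∑ s, F s * alternatization G s := by
  have key : ∀ π : Perm (Fin n), ∑ s, F (s ∘ π) * G s = ∑ s, F s * G (s ∘ ⇑π⁻¹) := fun π => by
    rw [← sum_comp_perm _ π⁻¹]
    simp [Function.comp_assoc]
  calc ∑ s, alternatization F s * G s
      = ∑ π : Perm (Fin n), ((sign π : ℤ) : ℝ) * ∑ s, F s * G (s ∘ ⇑π⁻¹) := by
        simp only [alternatization, sum_mul, ← key, mul_sum, mul_assoc]
        exact sum_comm
    _ = ∑ π : Perm (Fin n), ((sign π : ℤ) : ℝ) * ∑ s, F s * G (s ∘ π) :=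
        Fintype.sum_equiv (Equiv.inv _) _ _ fun π => by simp
    _ = ∑ s, F s * alternatization G s := by
        simp only [alternatization, mul_sum]
        rw [sum_comm]
        exact sum_congr rfl fun _ _ => sum_congr rfl fun _ _ => by ring

end Alternatization

section Coboundary
variable {X : Type*} {n : ℕ}

noncomputable def succAbovePerm (p : Fin (n + 2) × Perm (Fin (n + 1))) : Perm (Fin (n + 2)) :=
  (Fin.cycleRange p.1)⁻¹ * decomposeFin.symm (0, p.2)

lemma succAbovePerm_zero (i : Fin (n + 2)) (ρ : Perm (Fin (n + 1))) :
    succAbovePerm (i, ρ) 0 = i := by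
  rw [succAbovePerm, Perm.mul_apply, decomposeFin_symm_apply_zero, Perm.inv_eq_iff_eq,
    Fin.cycleRange_self]

lemma succAbovePerm_succ (i : Fin (n + 2)) (ρ : Perm (Fin (n + 1))) (j : Fin (n + 1)) :
    succAbovePerm (i, ρ) j.succ = i.succAbove (ρ j) := by
  rw [succAbovePerm, Perm.mul_apply, decomposeFin_symm_apply_succ, swap_self, Equiv.refl_apply,
    Perm.inv_eq_iff_eq, Fin.cycleRange_succAbove]

lemma sign_succAbovePerm (i : Fin (n + 2)) (ρ : Perm (Fin (n + 1))) :
    ((sign (succAbovePerm (i, ρ)) : ℤ) : ℝ) = (-1) ^ (i : ℕ) * (sign ρ : ℤ) := by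
  simp [succAbovePerm, Fin.sign_cycleRange]

lemma bijective_succAbovePerm : Function.Bijective (succAbovePerm (n := n)) := by
  refine (Fintype.bijective_iff_injective_and_card _).2 ⟨?_, ?_⟩
  · rintro ⟨i, ρ⟩ ⟨i', ρ'⟩ h
    obtain rfl : i = i' := by rw [← succAbovePerm_zero i ρ, h, succAbovePerm_zero]
    have := decomposeFin.symm.injective (mul_left_cancel h)
    simp_all
  · simp only [Fintype.card_prod, Fintype.card_perm, Fintype.card_fin]
    exact (Nat.factorial_succ _).symm

-- Laplace expansion along the first slot: sort the permutations by the image of `0`.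
lemma alternatization_comp_tail (G : (Fin (n + 1) → X) → ℝ) :
    alternatization (fun x : Fin (n + 2) → X => G (Fin.tail x)) = cobdry (alternatization G) := by
  funext x
  rw [alternatization, ← Fintype.sum_bijective _ bijective_succAbovePerm _ _ fun _ => rfl,
    Fintype.sum_prod_type, cobdry]
  refine sum_congr rfl fun i _ => ?_
  rw [alternatization, mul_sum]
  refine sum_congr rfl fun ρ _ => ?_
  have : Fin.tail (x ∘ succAbovePerm (i, ρ)) = (x ∘ i.succAbove) ∘ ρ := by
    funext j
    simp [Fin.tail, succAbovePerm_succ]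
  rw [this, sign_succAbovePerm, mul_assoc]

lemma cobdry_smul (c : ℝ) (f : (Fin (n + 1) → X) → ℝ) : cobdry (c • f) = c • cobdry f := by
  funext x
  simp only [cobdry, Pi.smul_apply, smul_eq_mul, mul_sum]
  exact sum_congr rfl fun _ _ => by ring

lemma AltChain.cobdry {f : (Fin (n + 1) → X) → ℝ} (hf : AltChain f) : AltChain (cobdry f) := by
  have h : _root_.cobdry f =
      ((n + 1).factorial : ℝ)⁻¹ • alternatization (fun x => f (Fin.tail x)) := by
    rw [alternatization_comp_tail, alternatization_of_altChain hf, cobdry_smul, smul_smul,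
      inv_mul_cancel₀ (by positivity), one_smul]
  rw [h]
  intro π x
  simp only [Pi.smul_apply, smul_eq_mul, altChain_alternatization _ π x]
  ring

variable [Fintype X]

lemma sum_mul_bdry (F : (Fin (n + 1) → X) → ℝ) (β : (Fin (n + 2) → X) → ℝ) :
    ∑ y, F y * bdry β y = ∑ s, F (Fin.tail s) * β s := by
  symm
  rw [← Equiv.sum_comp (Fin.consEquiv fun _ => X), Fintype.sum_prod_type, sum_comm]
  simp [bdry, mul_sum, Fin.consEquiv]

lemma factorial_mul_sum_cobdry_mul {f : (Fin (n + 1) → X) → ℝ} (hf : AltChain f)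
    {β : (Fin (n + 2) → X) → ℝ} (hβ : AltChain β) :
    ((n + 1).factorial : ℝ) * ∑ s, cobdry f s * β s
      = ((n + 2).factorial : ℝ) * ∑ y, f y * bdry β y := by
  calc ((n + 1).factorial : ℝ) * ∑ s, cobdry f s * β s
      = ∑ s, cobdry (alternatization f) s * β s := by
        simp only [alternatization_of_altChain hf, cobdry_smul, mul_sum, Pi.smul_apply,
          smul_eq_mul, mul_assoc]
    _ = ∑ s, f (Fin.tail s) * alternatization β s := by
        rw [← alternatization_comp_tail, sum_alternatization_mul]
    _ = ((n + 2).factorial : ℝ) * ∑ y, f y * bdry β y := by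
        simp only [alternatization_of_altChain hβ, sum_mul_bdry, mul_sum, Pi.smul_apply,
          smul_eq_mul, mul_left_comm]

lemma sum_cobdry_mul_eq_of_bdry_eq {f : (Fin (n + 1) → X) → ℝ} (hf : AltChain f)
    {α β : (Fin (n + 2) → X) → ℝ} (hα : AltChain α) (hβ : AltChain β) (h : bdry α = bdry β) :
    ∑ s, cobdry f s * α s = ∑ s, cobdry f s * β s := by
  have := factorial_mul_sum_cobdry_mul hf hα
  rw [h, ← factorial_mul_sum_cobdry_mul hf hβ] at this
  exact mul_left_cancel₀ (by positivity) this

end Coboundary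

section UnitChain
variable {X : Type*} [DecidableEq X] {n : ℕ}

lemma unitChain_eq_alternatization (t : Fin n → X) :
    unitChain t = alternatization fun s => if s = t then 1 else 0 := by
  funext s
  refine Fintype.sum_equiv (Equiv.inv _) _ _ fun π => ?_
  have : s = t ∘ π ↔ s ∘ ⇑π⁻¹ = t := by
    constructor <;> rintro rfl <;> funext j <;> simp
  simp [this]

lemma altChain_unitChain (t : Fin n → X) : AltChain (unitChain t) :=
  unitChain_eq_alternatization t ▸ altChain_alternatization _

variable [Fintype X]

lemma sum_unitChain_mul {h : (Fin n → X) → ℝ} (hh : AltChain h) (t : Fin n → X) :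
    ∑ s, unitChain t s * h s = (n.factorial : ℝ) * h t := by
  simp [unitChain_eq_alternatization, sum_alternatization_mul, alternatization_of_altChain hh]

lemma sum_bdry_unitChain_mul (G : (Fin (n + 1) → X) → ℝ) (t : Fin (n + 2) → X) :
    ∑ y, G y * bdry (unitChain t) y = cobdry (alternatization G) t := by
  rw [sum_mul_bdry, unitChain_eq_alternatization, ← sum_alternatization_mul,
    alternatization_comp_tail]
  simp

lemma sum_abs_unitChain_mul_le {d : (Fin n → X) → ℝ} (hd : ∀ x, 0 ≤ d x)
    (hperm : ∀ (π : Perm (Fin n)) x, d (x ∘ π) = d x) (t : Fin n → X) :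
    ∑ s, |unitChain t s| * d s ≤ (n.factorial : ℝ) * d t := by
  have hle : ∀ s, |unitChain t s| ≤ ∑ π : Perm (Fin n), if s ∘ π = t then 1 else 0 := fun s => by
    rw [unitChain_eq_alternatization, alternatization]
    refine (abs_sum_le_sum_abs _ _).trans_eq (sum_congr rfl fun π _ => ?_)
    rw [abs_mul, abs_intCast_units, one_mul, abs_of_nonneg (by positivity)]
  calc ∑ s, |unitChain t s| * d s
      ≤ ∑ s, (∑ π : Perm (Fin n), if s ∘ π = t then 1 else 0) * d s :=
        sum_le_sum fun s _ => mul_le_mul_of_nonneg_right (hle s) (hd s)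
    _ = ∑ π : Perm (Fin n), ∑ s, if s ∘ π = t then d (s ∘ π) else 0 := by
        simp only [sum_mul, ite_mul, one_mul, zero_mul, hperm]
        exact sum_comm
    _ = (n.factorial : ℝ) * d t := by
        simp [sum_comp_perm (fun s => if s = t then d s else 0), Fintype.card_perm]

end UnitChain

section Mass
variable {X : Type*} [Fintype X] {n : ℕ}

def altChains (X : Type*) (n : ℕ) : Submodule ℝ ((Fin n → X) → ℝ) where
  carrier := {α | AltChain α}
  add_mem' {α β} hα hβ π x := by simp [hα π x, hβ π x, mul_add]
  zero_mem' π x := by simp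
  smul_mem' c α hα π x := by simp [hα π x, mul_left_comm]

noncomputable def bdryₗ : ((Fin (n + 1) → X) → ℝ) →ₗ[ℝ] (Fin n → X) → ℝ where
  toFun := bdry
  map_add' α β := by funext y; simp [bdry, sum_add_distrib]
  map_smul' c α := by funext y; simp [bdry, mul_sum]

-- The paper's `∑_τ |α τ| d τ` over `n`-subsets `τ`; each of them has `n!` orderings.
noncomputable def chainMass (d : (Fin n → X) → ℝ) (hd : ∀ x, 0 ≤ d x) :
    Seminorm ℝ ((Fin n → X) → ℝ) :=
  Seminorm.of (fun α => (n.factorial : ℝ)⁻¹ * ∑ s, |α s| * d s)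
    (fun α β => by
      rw [← mul_add, ← sum_add_distrib]
      refine mul_le_mul_of_nonneg_left (sum_le_sum fun s _ => ?_) (by positivity)
      rw [← add_mul]
      exact mul_le_mul_of_nonneg_right (abs_add_le _ _) (hd s))
    (fun c α => by simp [abs_mul, mul_sum, mul_assoc, mul_left_comm])

variable [DecidableEq X]

theorem IsStrongPseudoMetric.exists_cobdry_eq {d : (Fin (n + 2) → X) → ℝ}
    (hd : IsStrongPseudoMetric (n + 1) d) {t : Fin (n + 2) → X} (ht : Function.Injective t) :
    ∃ f : (Fin (n + 1) → X) → ℝ, AltChain f ∧ (∀ s, |cobdry f s| ≤ d s) ∧ cobdry f t = d t := by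
  let T := bdryₗ ∘ₗ (altChains X (n + 2)).subtype
  let p := (chainMass d hd.nonneg).comp (altChains X (n + 2)).subtype
  let e (s : Fin (n + 2) → X) : altChains X (n + 2) := ⟨unitChain s, altChain_unitChain s⟩
  obtain ⟨c, hct, hc⟩ := exists_dotProduct_eq_of_le_seminorm T p (x₀ := e t) (hd.nonneg t)
    fun α hα => (le_inv_mul_iff₀ (by positivity)).2 (hd.strong_simplex t ht α α.2 hα)
  have hcob (s : Fin (n + 2) → X) : cobdry (alternatization c) s = c ⬝ᵥ T (e s) :=
    (sum_bdry_unitChain_mul c s).symm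
  have hp (s : Fin (n + 2) → X) : p (e s) ≤ d s :=
    (inv_mul_le_iff₀ (by positivity)).2 (sum_abs_unitChain_mul_le hd.nonneg hd.perm s)
  exact ⟨alternatization c, altChain_alternatization c,
    fun s => hcob s ▸ (hc _).trans (hp s), hcob t ▸ hct⟩

end Mass

section Main

lemma exists_perm_eq_comp {X : Type*} {n : ℕ} {x y : Fin n → X} (hy : Function.Injective y)
    (h : ∀ j, ∃ i, x i = y j) : ∃ π : Perm (Fin n), y = x ∘ π := by
  choose π hπ using h
  have hπinj : Function.Injective π := fun a b hab => hy (by rw [← hπ a, ← hπ b, hab])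
  exact ⟨Equiv.ofBijective π hπinj.bijective_of_finite, funext fun j => (hπ j).symm⟩

lemma exists_injective_mem_of_card_eq {X : Type*} {n : ℕ} {σ : Finset X} (hσ : σ.card = n) :
    ∃ t : Fin n → X, Function.Injective t ∧ ∀ j, t j ∈ σ :=
  let e := σ.equivFinOfCardEq hσ
  ⟨fun j => e.symm j, Subtype.val_injective.comp e.symm.injective, fun j => (e.symm j).2⟩

variable {X : Type*} [Fintype X] [DecidableEq X]

theorem IsStrongPseudoMetric.isCoboundaryMetric {k : ℕ} {d : (Fin (k + 2) → X) → ℝ}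
    (hd : IsStrongPseudoMetric (k + 1) d) :
    IsCoboundaryMetric k ((Fintype.card X).choose (k + 2)) linfNorm d := by
  let S := (univ : Finset X).powersetCard (k + 2)
  have hS (σ : S) := exists_injective_mem_of_card_eq (mem_powersetCard.1 σ.2).2
  choose t ht htσ using hS
  choose f hf hfd hft using fun σ : S => hd.exists_cobdry_eq (ht σ)
  let e : Fin ((Fintype.card X).choose (k + 2)) ≃ S :=
    (S.equivFinOfCardEq (by simp [S, card_powersetCard])).symm
  refine ⟨fun i => f (e i), fun i => hf _, fun x hx => ?_, hd.eq_zero⟩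
  let σ : S :=
    ⟨univ.image x, mem_powersetCard.2 ⟨subset_univ _, by simp [card_image_of_injective _ hx]⟩⟩
  obtain ⟨π, hπ⟩ := exists_perm_eq_comp (ht σ) fun j => by simpa [σ] using htσ σ j
  have hσ : |cobdry (f σ) x| = d x := by
    rw [← (hf σ).cobdry.abs_comp_perm π, ← hπ, hft, abs_of_nonneg (hd.nonneg _), hπ, hd.perm]
  refine le_antisymm ?_ ((pi_norm_le_iff_of_nonneg (hd.nonneg x)).2 fun i => hfd _ x)
  calc d x = ‖cobdry (f (e (e.symm σ))) x‖ := by rw [e.apply_symm_apply, Real.norm_eq_abs, hσ]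
    _ ≤ linfNorm fun i => cobdry (f (e i)) x := norm_le_pi_norm (fun i => cobdry (f (e i)) x) _

lemma factorial_mul_abs_cobdry_le {n : ℕ} {f : (Fin (n + 1) → X) → ℝ} (hf : AltChain f)
    {d : (Fin (n + 2) → X) → ℝ} (hfd : ∀ s, |cobdry f s| ≤ d s) (t : Fin (n + 2) → X)
    {α : (Fin (n + 2) → X) → ℝ} (hα : AltChain α) (hbd : bdry α = bdry (unitChain t)) :
    ((n + 2).factorial : ℝ) * |cobdry f t| ≤ ∑ s, |α s| * d s := by
  have hpair : ((n + 2).factorial : ℝ) * cobdry f t = ∑ s, cobdry f s * α s := by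
    rw [← sum_cobdry_mul_eq_of_bdry_eq hf (altChain_unitChain t) hα hbd.symm,
      ← sum_unitChain_mul hf.cobdry t]
    exact sum_congr rfl fun s _ => mul_comm _ _
  calc ((n + 2).factorial : ℝ) * |cobdry f t| = |∑ s, cobdry f s * α s| := by
        rw [← hpair, abs_mul, Nat.abs_cast]
    _ ≤ ∑ s, |α s| * d s := (abs_sum_le_sum_abs _ _).trans <| sum_le_sum fun s _ => by
        rw [abs_mul, mul_comm]
        exact mul_le_mul_of_nonneg_left (hfd s) (abs_nonneg _)

theorem IsCoboundaryMetric.isStrongPseudoMetric {k m : ℕ} {d : (Fin (k + 2) → X) → ℝ}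
    (h : IsCoboundaryMetric k m linfNorm d) : IsStrongPseudoMetric (k + 1) d := by
  obtain ⟨f, hf, hinj, hnon⟩ := h
  have hfd (i : Fin m) (x : Fin (k + 2) → X) : |cobdry (f i) x| ≤ d x := by
    by_cases hx : Function.Injective x
    · rw [hinj x hx, ← Real.norm_eq_abs]
      exact norm_le_pi_norm (fun i => cobdry (f i) x) i
    · rw [(hf i).cobdry.eq_zero_of_not_injective hx, hnon x hx, abs_zero]
  have hd (x : Fin (k + 2) → X) : 0 ≤ d x := by
    by_cases hx : Function.Injective x
    · exact hinj x hx ▸ norm_nonneg _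
    · exact (hnon x hx).ge
  refine ⟨hd, hnon, fun π x => ?_, fun t ht α hα hbd => ?_⟩
  · by_cases hx : Function.Injective x
    · have hv : (fun i => cobdry (f i) (x ∘ π)) = ((sign π : ℤ) : ℝ) • fun i => cobdry (f i) x :=
        funext fun i => (hf i).cobdry π x
      rw [hinj x hx, hinj _ ((Equiv.injective_comp π x).2 hx), linfNorm, linfNorm, hv, norm_smul,
        Real.norm_eq_abs, abs_intCast_units, one_mul]
    · rw [hnon x hx, hnon _ (mt (Equiv.injective_comp π x).1 hx)]
  · rw [hinj t ht, linfNorm, ← le_div_iff₀' (by positivity)]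
    have hmass : 0 ≤ ∑ s, |α s| * d s := sum_nonneg fun s _ => mul_nonneg (abs_nonneg _) (hd s)
    refine (pi_norm_le_iff_of_nonneg (by positivity)).2 fun i => ?_
    rw [Real.norm_eq_abs, le_div_iff₀' (by positivity)]
    exact factorial_mul_abs_cobdry_le (hf i) (hfd i) t hα hbd

end Main

/-- every strong pseudo metric of arity `k + 2` on an `n`-point set
is in `C_{k+2,∞}^{binom(n, k+2)}`; consequently the coboundary metrics with
respect to the `ℓ_∞` (sup) norm are exactly the strong pseudo metrics. -/
theorem stmt_8 (k : ℕ) {X : Type*} [Fintype X] [DecidableEq X]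
    (d : (Fin (k + 2) → X) → ℝ) :
    (IsStrongPseudoMetric (k + 1) d →
      IsCoboundaryMetric k ((Fintype.card X).choose (k + 2)) linfNorm d) ∧
    (IsStrongPseudoMetric (k + 1) d ↔
      ∃ m : ℕ, IsCoboundaryMetric k m linfNorm d) :=
  ⟨IsStrongPseudoMetric.isCoboundaryMetric,
    fun hd => ⟨_, hd.isCoboundaryMetric⟩, fun ⟨_, h⟩ => h.isStrongPseudoMetric⟩
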